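/- Let L > 0, T > 0, C > 0, δ₂ > 0, and let V̂ : ℝ³ → ℝ satisfy |V̂(p)| ≤ C·(1+|p|)^{−(3+δ₂)} for all p, with 𝔟 := sup_{k∈ℤ³} |V̂(2πk/L)| > 0. Let α : [0,T] → (ℤ³ → ℂ) satisfy the Duhamel form of the momentum-space Hartree equation, with t ↦ α(t)(n) continuous for each n, and suppose both S(t) := Σ_{n} |α(t)(n)| and T₊(t) := Σ_{n} (4π²|n|²/L²)·|α(t)(n)| are finite for each t and continuous in t, with S(0) > 0. Then for every t ∈ [0,T] with 2·S(0)²·𝔟·t < 1: T₊(t) ≤ T₊(0)/(1 − 2S(0)²𝔟t) + (8C/(27𝔟))·S(0)·( (1 − 2S(0)²𝔟t)^{−3/2} − (1 − 2S(0)²𝔟t)^{−1} ). -/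

import Mathlib

open scoped BigOperators
open MeasureTheory
open scoped ENNReal NNReal

noncomputable section

/-- Squared Euclidean norm of a lattice point `n ∈ ℤ³`. -/
def znormSq (n : Fin 3 → ℤ) : ℝ := ∑ i, ((n i : ℝ)) ^ 2

/-- Euclidean norm on `ℝ³`. -/
def rnorm (p : Fin 3 → ℝ) : ℝ := Real.sqrt (∑ i, (p i) ^ 2)

/-- Autocorrelation `β(k) = Σ_m conj(α(m))·α(m+k)` of a family `α : ℤ³ → ℂ`. -/
def autocorr (a : (Fin 3 → ℤ) → ℂ) (k : Fin 3 → ℤ) : ℂ :=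
  ∑' m, (starRingEnd ℂ) (a m) * a (m + k)

/-- The sampled Fourier transform of the potential at momentum `2πk/L`. -/
def Vk (L : ℝ) (Vhat : (Fin 3 → ℝ) → ℝ) (k : Fin 3 → ℤ) : ℝ :=
  Vhat fun i => 2 * Real.pi * (k i : ℝ) / L

/-- Free propagator `e^{−4π²i|n|²t/L²}` in momentum space. -/
def freeProp (L : ℝ) (n : Fin 3 → ℤ) (t : ℝ) : ℂ :=
  Complex.exp (-(4 * (Real.pi : ℂ) ^ 2 * Complex.I * ((znormSq n : ℝ) : ℂ) * (t : ℂ)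
    / ((L : ℂ)) ^ 2))

/-- The interaction term `Σ_k α(n−k)·V̂(2πk/L)·β(k)`. -/
def hartreeSum (L : ℝ) (Vhat : (Fin 3 → ℝ) → ℝ) (a : (Fin 3 → ℤ) → ℂ)
    (n : Fin 3 → ℤ) : ℂ :=
  ∑' k, a (n - k) * (Vk L Vhat k : ℂ) * autocorr a k

/-- `α` satisfies the Duhamel (mild) form of the momentum-space Hartree equation
on `[0,T]`. -/
def DuhamelSol (L T : ℝ) (Vhat : (Fin 3 → ℝ) → ℝ)
    (α : ℝ → (Fin 3 → ℤ) → ℂ) : Prop :=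
  ∀ n : Fin 3 → ℤ, ∀ t ∈ Set.Icc (0 : ℝ) T,
    α t n = freeProp L n t * α 0 n
      - Complex.I * ∫ s in (0 : ℝ)..t, freeProp L n (t - s) * hartreeSum L Vhat (α s) n

/-- `ℓ¹`-norm of the coefficients at time `t`. -/
def Snorm (α : ℝ → (Fin 3 → ℤ) → ℂ) (t : ℝ) : ℝ :=
  ∑' n, ‖α t n‖

/-- Kinetic-weighted `ℓ¹`-norm `T₊(t) = Σ_n (4π²|n|²/L²)·|α(t)(n)|`. -/
def Tnorm (L : ℝ) (α : ℝ → (Fin 3 → ℤ) → ℂ) (t : ℝ) : ℝ :=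
  ∑' n, (4 * Real.pi ^ 2 * znormSq n / L ^ 2) * ‖α t n‖

section auxiliaryLemmas
lemma znormSq_nonneg (n : Fin 3 → ℤ) : 0 ≤ znormSq n :=
  Finset.sum_nonneg fun i _ => sq_nonneg _

lemma znormSq_split (n k : Fin 3 → ℤ) :
    znormSq n ≤ 2 * znormSq (n - k) + 2 * znormSq k := by
  unfold znormSq
  rw [Finset.mul_sum, Finset.mul_sum, ← Finset.sum_add_distrib]
  refine Finset.sum_le_sum fun i _ => ?_
  have h : ((n - k) i : ℝ) = (n i : ℝ) - (k i : ℝ) := by push_cast [Pi.sub_apply]; ring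
  rw [h]
  nlinarith [sq_nonneg ((n i : ℝ) - 2 * (k i : ℝ))]

lemma wt_split (L : ℝ) (hL : 0 < L) (n k : Fin 3 → ℤ) :
    4 * Real.pi ^ 2 * znormSq n / L ^ 2
      ≤ 2 * (4 * Real.pi ^ 2 * znormSq (n - k) / L ^ 2)
        + 2 * (4 * Real.pi ^ 2 * znormSq k / L ^ 2) := by
  have hL2 : (0:ℝ) < L ^ 2 := by positivity
  have h := znormSq_split n k
  have h4 : (0:ℝ) ≤ 4 * Real.pi ^ 2 := by positivity
  rw [show 2 * (4 * Real.pi ^ 2 * znormSq (n - k) / L ^ 2)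
      + 2 * (4 * Real.pi ^ 2 * znormSq k / L ^ 2)
      = 4 * Real.pi ^ 2 * (2 * znormSq (n - k) + 2 * znormSq k) / L ^ 2 by ring]
  rw [div_le_div_iff_of_pos_right hL2]
  exact mul_le_mul_of_nonneg_left h h4

lemma decay_bound (L C δ₂ : ℝ) (hL : 0 < L) (hC : 0 < C) (hδ : 0 < δ₂)
    (Vhat : (Fin 3 → ℝ) → ℝ)
    (hdecay : ∀ p, |Vhat p| ≤ C * (1 + rnorm p) ^ (-(3 + δ₂))) (k : Fin 3 → ℤ) :
    4 * Real.pi ^ 2 * znormSq k / L ^ 2 * |Vk L Vhat k| ≤ 4 * C / 27 := by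
  set p : Fin 3 → ℝ := fun i => 2 * Real.pi * (k i : ℝ) / L with hp
  have hr2 : rnorm p ^ 2 = 4 * Real.pi ^ 2 * znormSq k / L ^ 2 := by
    rw [rnorm, Real.sq_sqrt (Finset.sum_nonneg fun i _ => sq_nonneg _)]
    have he : ∀ i ∈ Finset.univ, (p i) ^ 2 = 4 * Real.pi ^ 2 * ((k i : ℝ)) ^ 2 / L ^ 2 :=
      fun i _ => by rw [hp]; field_simp; ring
    rw [Finset.sum_congr rfl he, znormSq, ← Finset.sum_div, ← Finset.mul_sum]
  set r := rnorm p with hrdef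
  have h1r : (0:ℝ) ≤ r := Real.sqrt_nonneg _
  have hpow : (1 + r) ^ (-(3 + δ₂)) ≤ ((1 + r) ^ (3:ℕ))⁻¹ := by
    have h1 : (1:ℝ) ≤ 1 + r := by linarith
    calc (1 + r) ^ (-(3 + δ₂)) ≤ (1 + r) ^ (-(3:ℝ)) :=
          Real.rpow_le_rpow_of_exponent_le h1 (by linarith)
      _ = ((1 + r) ^ (3:ℕ))⁻¹ := by
          rw [Real.rpow_neg (by linarith : (0:ℝ) ≤ 1 + r),
            show ((3:ℝ)) = ((3:ℕ):ℝ) by norm_num, Real.rpow_natCast]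
  have hVp : Vk L Vhat k = Vhat p := rfl
  have h4 : r ^ 2 * ((1 + r) ^ (3:ℕ))⁻¹ ≤ 4 / 27 := by
    rw [inv_eq_one_div, ← div_eq_mul_one_div, div_le_iff₀ (by positivity)]
    nlinarith [sq_nonneg (r - 2), h1r]
  calc 4 * Real.pi ^ 2 * znormSq k / L ^ 2 * |Vk L Vhat k|
      = r ^ 2 * |Vhat p| := by rw [hr2, hVp]
    _ ≤ r ^ 2 * (C * (1 + r) ^ (-(3 + δ₂))) :=
        mul_le_mul_of_nonneg_left (hdecay p) (sq_nonneg r)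
    _ ≤ r ^ 2 * (C * ((1 + r) ^ (3:ℕ))⁻¹) :=
        mul_le_mul_of_nonneg_left (mul_le_mul_of_nonneg_left hpow (le_of_lt hC)) (sq_nonneg r)
    _ = C * (r ^ 2 * ((1 + r) ^ (3:ℕ))⁻¹) := by ring
    _ ≤ C * (4 / 27) := mul_le_mul_of_nonneg_left h4 (le_of_lt hC)
    _ = 4 * C / 27 := by ring

lemma enn_tsum_le {ι : Type*} (f : ι → ℂ) :
    (‖∑' i, f i‖₊ : ℝ≥0∞) ≤ ∑' i, (‖f i‖₊ : ℝ≥0∞) := by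
  by_cases h : Summable fun i => ‖f i‖₊
  · rw [← ENNReal.coe_tsum h]
    exact_mod_cast nnnorm_tsum_le h
  · have : (∑' i, (‖f i‖₊ : ℝ≥0∞)) = ⊤ := by
      by_contra hne
      exact h (ENNReal.tsum_coe_ne_top_iff_summable.1 hne)
    simp [this]

lemma freeProp_abs (L : ℝ) (hL : L ≠ 0) (n : Fin 3 → ℤ) (t : ℝ) :
    ‖freeProp L n t‖ = 1 := by
  have h : freeProp L n t
      = Complex.exp (((-(4 * Real.pi ^ 2 * znormSq n * t / L ^ 2) : ℝ) : ℂ) * Complex.I) := by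
    unfold freeProp
    congr 1
    have hL2 : ((L : ℂ)) ^ 2 ≠ 0 := pow_ne_zero _ (by exact_mod_cast hL)
    push_cast
    field_simp
  rw [h, Complex.norm_exp_ofReal_mul_I]

lemma freeProp_nnnorm (L : ℝ) (hL : L ≠ 0) (n : Fin 3 → ℤ) (t : ℝ) :
    ‖freeProp L n t‖₊ = 1 := by
  ext
  simpa using freeProp_abs L hL n t

def Hker (L : ℝ) (Vhat : (Fin 3 → ℝ) → ℝ) (a : (Fin 3 → ℤ) → ℂ) (n : Fin 3 → ℤ) : ℝ≥0∞ :=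
  ∑' k : Fin 3 → ℤ, ∑' m : Fin 3 → ℤ,
    (‖a (n - k)‖₊ : ℝ≥0∞) * (‖Vk L Vhat k‖₊ : ℝ≥0∞) * ((‖a m‖₊ : ℝ≥0∞) * (‖a (m + k)‖₊ : ℝ≥0∞))

lemma hartree_nnnorm_le (L : ℝ) (Vhat : (Fin 3 → ℝ) → ℝ) (a : (Fin 3 → ℤ) → ℂ) (n : Fin 3 → ℤ) :
    (‖hartreeSum L Vhat a n‖₊ : ℝ≥0∞) ≤ Hker L Vhat a n := by
  refine le_trans (enn_tsum_le _) (ENNReal.tsum_le_tsum fun k => ?_)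
  have hterm : (‖a (n - k) * ((Vk L Vhat k : ℝ) : ℂ) * autocorr a k‖₊ : ℝ≥0∞)
      = (‖a (n - k)‖₊ : ℝ≥0∞) * (‖Vk L Vhat k‖₊ : ℝ≥0∞) * (‖autocorr a k‖₊ : ℝ≥0∞) := by
    simp [nnnorm_mul]
  have haut : (‖autocorr a k‖₊ : ℝ≥0∞) ≤ ∑' m, (‖a m‖₊ : ℝ≥0∞) * (‖a (m + k)‖₊ : ℝ≥0∞) := by
    refine le_trans (enn_tsum_le _) (ENNReal.tsum_le_tsum fun m => ?_)
    rw [nnnorm_mul, ENNReal.coe_mul]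
    simp
  rw [hterm, ENNReal.tsum_mul_left]
  exact mul_le_mul' le_rfl haut

lemma tsum_shift (f : (Fin 3 → ℤ) → ℝ≥0∞) (k : Fin 3 → ℤ) :
    ∑' n, f (n - k) = ∑' n, f n := (Equiv.subRight k).tsum_eq f

lemma tsum_shift' (f : (Fin 3 → ℤ) → ℝ≥0∞) (m : Fin 3 → ℤ) :
    ∑' k, f (m + k) = ∑' k, f k := (Equiv.addLeft m).tsum_eq f

lemma tsum_M (a : (Fin 3 → ℤ) → ℂ) :
    ∑' (k : Fin 3 → ℤ), ∑' (m : Fin 3 → ℤ), (‖a m‖₊ : ℝ≥0∞) * (‖a (m + k)‖₊ : ℝ≥0∞)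
      = (∑' n, (‖a n‖₊ : ℝ≥0∞)) ^ 2 := by
  rw [ENNReal.tsum_comm]
  have h : ∀ m : Fin 3 → ℤ, ∑' (k : Fin 3 → ℤ), (‖a m‖₊ : ℝ≥0∞) * (‖a (m + k)‖₊ : ℝ≥0∞)
      = (‖a m‖₊ : ℝ≥0∞) * ∑' n, (‖a n‖₊ : ℝ≥0∞) := by
    intro m
    rw [ENNReal.tsum_mul_left, tsum_shift' (fun n => (‖a n‖₊ : ℝ≥0∞)) m]
  rw [tsum_congr h, ENNReal.tsum_mul_right, sq]

lemma tsum_mul_Hker (L : ℝ) (Vhat : (Fin 3 → ℝ) → ℝ) (a : (Fin 3 → ℤ) → ℂ)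
    (w : (Fin 3 → ℤ) → ℝ≥0∞) :
    ∑' n, w n * Hker L Vhat a n
      = ∑' (k : Fin 3 → ℤ), (‖Vk L Vhat k‖₊ : ℝ≥0∞) *
          ((∑' n, w n * (‖a (n - k)‖₊ : ℝ≥0∞)) *
            ∑' (m : Fin 3 → ℤ), (‖a m‖₊ : ℝ≥0∞) * (‖a (m + k)‖₊ : ℝ≥0∞)) := by
  have h1 : ∀ n, w n * Hker L Vhat a n = ∑' (k : Fin 3 → ℤ), ∑' (m : Fin 3 → ℤ),
      w n * ((‖a (n - k)‖₊ : ℝ≥0∞) * (‖Vk L Vhat k‖₊ : ℝ≥0∞) *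
        ((‖a m‖₊ : ℝ≥0∞) * (‖a (m + k)‖₊ : ℝ≥0∞))) := by
    intro n
    rw [Hker, ← ENNReal.tsum_mul_left]
    exact tsum_congr fun k => (ENNReal.tsum_mul_left).symm
  rw [tsum_congr h1, ENNReal.tsum_comm]
  refine tsum_congr fun k => ?_
  have h2 : ∀ n, ∑' (m : Fin 3 → ℤ),
      w n * ((‖a (n - k)‖₊ : ℝ≥0∞) * (‖Vk L Vhat k‖₊ : ℝ≥0∞) *
        ((‖a m‖₊ : ℝ≥0∞) * (‖a (m + k)‖₊ : ℝ≥0∞)))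
      = (‖Vk L Vhat k‖₊ : ℝ≥0∞) * (w n * (‖a (n - k)‖₊ : ℝ≥0∞)) *
          ∑' (m : Fin 3 → ℤ), (‖a m‖₊ : ℝ≥0∞) * (‖a (m + k)‖₊ : ℝ≥0∞) := by
    intro n
    rw [← ENNReal.tsum_mul_left]
    exact tsum_congr fun m => by ring
  rw [tsum_congr h2, ENNReal.tsum_mul_right, ENNReal.tsum_mul_left]
  ring

lemma tsum_Hker_le (L : ℝ) (Vhat : (Fin 3 → ℝ) → ℝ) (a : (Fin 3 → ℤ) → ℂ)
    (B : ℝ≥0∞) (hB : ∀ k, (‖Vk L Vhat k‖₊ : ℝ≥0∞) ≤ B) :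
    ∑' n, Hker L Vhat a n ≤ B * (∑' n, (‖a n‖₊ : ℝ≥0∞)) ^ 3 := by
  have h0 : ∑' n, Hker L Vhat a n = ∑' n, (1 : ℝ≥0∞) * Hker L Vhat a n := by
    simp
  rw [h0, tsum_mul_Hker]
  have h1 : ∀ k : Fin 3 → ℤ, (‖Vk L Vhat k‖₊ : ℝ≥0∞) *
      ((∑' n, (1:ℝ≥0∞) * (‖a (n - k)‖₊ : ℝ≥0∞)) *
        ∑' (m : Fin 3 → ℤ), (‖a m‖₊ : ℝ≥0∞) * (‖a (m + k)‖₊ : ℝ≥0∞))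
      ≤ B * ((∑' n, (‖a n‖₊ : ℝ≥0∞)) *
        ∑' (m : Fin 3 → ℤ), (‖a m‖₊ : ℝ≥0∞) * (‖a (m + k)‖₊ : ℝ≥0∞)) := by
    intro k
    have : ∑' n, (1:ℝ≥0∞) * (‖a (n - k)‖₊ : ℝ≥0∞) = ∑' n, (‖a n‖₊ : ℝ≥0∞) := by
      simp only [one_mul]
      exact tsum_shift (fun n => (‖a n‖₊ : ℝ≥0∞)) k
    rw [this]
    exact mul_le_mul' (hB k) le_rfl
  refine le_trans (ENNReal.tsum_le_tsum h1) ?_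
  rw [ENNReal.tsum_mul_left, ENNReal.tsum_mul_left, tsum_M]
  rw [← mul_assoc, pow_succ]
  ring_nf
  exact le_rfl

lemma tsum_w_Hker_le (L : ℝ) (Vhat : (Fin 3 → ℝ) → ℝ) (a : (Fin 3 → ℤ) → ℂ)
    (w : (Fin 3 → ℤ) → ℝ≥0∞) (B Cq : ℝ≥0∞)
    (hB : ∀ k, (‖Vk L Vhat k‖₊ : ℝ≥0∞) ≤ B)
    (hCq : ∀ k, w k * (‖Vk L Vhat k‖₊ : ℝ≥0∞) ≤ Cq)
    (hsplit : ∀ n k : Fin 3 → ℤ, w n ≤ 2 * w (n - k) + 2 * w k) :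
    ∑' n, w n * Hker L Vhat a n
      ≤ 2 * B * (∑' n, w n * (‖a n‖₊ : ℝ≥0∞)) * (∑' n, (‖a n‖₊ : ℝ≥0∞)) ^ 2
        + 2 * Cq * (∑' n, (‖a n‖₊ : ℝ≥0∞)) ^ 3 := by
  set A := ∑' n, (‖a n‖₊ : ℝ≥0∞) with hA
  set W := ∑' n, w n * (‖a n‖₊ : ℝ≥0∞) with hW
  rw [tsum_mul_Hker]
  have key : ∀ k : Fin 3 → ℤ, (‖Vk L Vhat k‖₊ : ℝ≥0∞) *
      ((∑' n, w n * (‖a (n - k)‖₊ : ℝ≥0∞)) *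
        ∑' (m : Fin 3 → ℤ), (‖a m‖₊ : ℝ≥0∞) * (‖a (m + k)‖₊ : ℝ≥0∞))
      ≤ (2 * B * W + 2 * Cq * A) *
          ∑' (m : Fin 3 → ℤ), (‖a m‖₊ : ℝ≥0∞) * (‖a (m + k)‖₊ : ℝ≥0∞) := by
    intro k
    have hwn : ∑' n, w n * (‖a (n - k)‖₊ : ℝ≥0∞) ≤ 2 * W + 2 * w k * A := by
      have step : ∀ n, w n * (‖a (n - k)‖₊ : ℝ≥0∞)
          ≤ 2 * (w (n - k) * (‖a (n - k)‖₊ : ℝ≥0∞)) + 2 * w k * (‖a (n - k)‖₊ : ℝ≥0∞) := by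
        intro n
        calc w n * (‖a (n - k)‖₊ : ℝ≥0∞)
            ≤ (2 * w (n - k) + 2 * w k) * (‖a (n - k)‖₊ : ℝ≥0∞) :=
              mul_le_mul' (hsplit n k) le_rfl
          _ = 2 * (w (n - k) * (‖a (n - k)‖₊ : ℝ≥0∞)) + 2 * w k * (‖a (n - k)‖₊ : ℝ≥0∞) := by
              ring
      refine le_trans (ENNReal.tsum_le_tsum step) ?_
      rw [ENNReal.tsum_add, ENNReal.tsum_mul_left, ENNReal.tsum_mul_left,
        tsum_shift (fun n => w n * (‖a n‖₊ : ℝ≥0∞)) k,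
        tsum_shift (fun n => (‖a n‖₊ : ℝ≥0∞)) k, ← hW, ← hA]
    calc (‖Vk L Vhat k‖₊ : ℝ≥0∞) * ((∑' n, w n * (‖a (n - k)‖₊ : ℝ≥0∞)) *
          ∑' (m : Fin 3 → ℤ), (‖a m‖₊ : ℝ≥0∞) * (‖a (m + k)‖₊ : ℝ≥0∞))
        ≤ (‖Vk L Vhat k‖₊ : ℝ≥0∞) * ((2 * W + 2 * w k * A) *
          ∑' (m : Fin 3 → ℤ), (‖a m‖₊ : ℝ≥0∞) * (‖a (m + k)‖₊ : ℝ≥0∞)) := by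
          exact mul_le_mul' le_rfl (mul_le_mul' hwn le_rfl)
      _ = (2 * ((‖Vk L Vhat k‖₊ : ℝ≥0∞) * W) + 2 * (w k * (‖Vk L Vhat k‖₊ : ℝ≥0∞)) * A) *
          ∑' (m : Fin 3 → ℤ), (‖a m‖₊ : ℝ≥0∞) * (‖a (m + k)‖₊ : ℝ≥0∞) := by ring
      _ ≤ (2 * (B * W) + 2 * Cq * A) *
          ∑' (m : Fin 3 → ℤ), (‖a m‖₊ : ℝ≥0∞) * (‖a (m + k)‖₊ : ℝ≥0∞) := by
          gcongr
          · exact hB k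
          · exact hCq k
      _ = (2 * B * W + 2 * Cq * A) *
          ∑' (m : Fin 3 → ℤ), (‖a m‖₊ : ℝ≥0∞) * (‖a (m + k)‖₊ : ℝ≥0∞) := by ring
  refine le_trans (ENNReal.tsum_le_tsum key) ?_
  rw [ENNReal.tsum_mul_left, tsum_M]
  have : (2 * B * W + 2 * Cq * A) * A ^ 2 = 2 * B * W * A ^ 2 + 2 * Cq * A ^ 3 := by ring
  rw [this]

lemma Hker_aemeasurable (L T : ℝ) (Vhat : (Fin 3 → ℝ) → ℝ) (α : ℝ → (Fin 3 → ℤ) → ℂ)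
    (hcont : ∀ n : Fin 3 → ℤ, ContinuousOn (fun t => α t n) (Set.Icc 0 T))
    {t : ℝ} (ht : t ∈ Set.Icc (0 : ℝ) T) (n : Fin 3 → ℤ) :
    AEMeasurable (fun s => Hker L Vhat (α s) n)
      ((volume : Measure ℝ).restrict (Set.Ioc 0 t)) := by
  have hsub : Set.Ioc (0:ℝ) t ⊆ Set.Icc 0 T :=
    fun s hs => ⟨le_of_lt hs.1, hs.2.trans ht.2⟩
  have base : ∀ m : Fin 3 → ℤ, AEMeasurable (fun s => α s m)
      ((volume : Measure ℝ).restrict (Set.Ioc 0 t)) := fun m =>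
    ((hcont m).aemeasurable measurableSet_Icc).mono_measure
      (Measure.restrict_mono hsub le_rfl)
  unfold Hker
  refine AEMeasurable.ennreal_tsum fun k => ?_
  refine AEMeasurable.ennreal_tsum fun m => ?_
  exact (((base (n - k)).enorm.mul aemeasurable_const).mul
    ((base m).enorm.mul ((base (m + k)).enorm)))

lemma duhamel_wsum_le (L T : ℝ) (hL : 0 < L) (Vhat : (Fin 3 → ℝ) → ℝ)
    (α : ℝ → (Fin 3 → ℤ) → ℂ) (hduh : DuhamelSol L T Vhat α)
    (hcont : ∀ n : Fin 3 → ℤ, ContinuousOn (fun t => α t n) (Set.Icc 0 T))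
    (u : (Fin 3 → ℤ) → ℝ≥0∞) (hu : ∀ n, u n ≠ ∞)
    {t : ℝ} (ht : t ∈ Set.Icc (0 : ℝ) T) :
    ∑' n, u n * (‖α t n‖₊ : ℝ≥0∞)
      ≤ ∑' n, u n * (‖α 0 n‖₊ : ℝ≥0∞)
        + ∫⁻ s in Set.Ioc (0:ℝ) t, ∑' n, u n * Hker L Vhat (α s) n := by
  have key : ∀ n, (‖α t n‖₊ : ℝ≥0∞)
      ≤ (‖α 0 n‖₊ : ℝ≥0∞) + ∫⁻ s in Set.Ioc (0:ℝ) t, Hker L Vhat (α s) n := by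
    intro n
    rw [hduh n t ht]
    have step1 : (‖freeProp L n t * α 0 n - Complex.I *
            ∫ s in (0:ℝ)..t, freeProp L n (t - s) * hartreeSum L Vhat (α s) n‖₊ : ℝ≥0∞)
        ≤ (‖α 0 n‖₊ : ℝ≥0∞) + (‖∫ s in Set.Ioc (0:ℝ) t,
              freeProp L n (t - s) * hartreeSum L Vhat (α s) n‖₊ : ℝ≥0∞) := by
        calc (‖freeProp L n t * α 0 n - Complex.I *
              ∫ s in (0:ℝ)..t, freeProp L n (t - s) * hartreeSum L Vhat (α s) n‖₊ : ℝ≥0∞)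
            ≤ (‖freeProp L n t * α 0 n‖₊ : ℝ≥0∞)
              + (‖Complex.I * ∫ s in (0:ℝ)..t,
                  freeProp L n (t - s) * hartreeSum L Vhat (α s) n‖₊ : ℝ≥0∞) := by
              exact_mod_cast nnnorm_sub_le _ _
          _ = (‖α 0 n‖₊ : ℝ≥0∞) + (‖∫ s in Set.Ioc (0:ℝ) t,
                freeProp L n (t - s) * hartreeSum L Vhat (α s) n‖₊ : ℝ≥0∞) := by
              rw [nnnorm_mul, nnnorm_mul, freeProp_nnnorm L (ne_of_gt hL),
                Complex.nnnorm_I, one_mul, one_mul,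
                intervalIntegral.integral_of_le ht.1]
    refine step1.trans (add_le_add le_rfl ?_)
    refine le_trans (enorm_integral_le_lintegral_enorm _) (lintegral_mono fun s => ?_)
    change (‖_‖₊ : ℝ≥0∞) ≤ _
    rw [nnnorm_mul, ENNReal.coe_mul, freeProp_nnnorm L (ne_of_gt hL), ENNReal.coe_one, one_mul]
    exact hartree_nnnorm_le L Vhat (α s) n
  calc ∑' n, u n * (‖α t n‖₊ : ℝ≥0∞)
      ≤ ∑' n, (u n * (‖α 0 n‖₊ : ℝ≥0∞)
          + u n * ∫⁻ s in Set.Ioc (0:ℝ) t, Hker L Vhat (α s) n) := by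
        refine ENNReal.tsum_le_tsum fun n => ?_
        rw [← mul_add]
        exact mul_le_mul' le_rfl (key n)
    _ = ∑' n, u n * (‖α 0 n‖₊ : ℝ≥0∞)
          + ∑' n, u n * ∫⁻ s in Set.Ioc (0:ℝ) t, Hker L Vhat (α s) n := ENNReal.tsum_add
    _ = ∑' n, u n * (‖α 0 n‖₊ : ℝ≥0∞)
          + ∫⁻ s in Set.Ioc (0:ℝ) t, ∑' n, u n * Hker L Vhat (α s) n := by
        congr 1
        have h1 : ∀ n : Fin 3 → ℤ, u n * ∫⁻ s in Set.Ioc (0:ℝ) t, Hker L Vhat (α s) n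
            = ∫⁻ s in Set.Ioc (0:ℝ) t, u n * Hker L Vhat (α s) n := fun n =>
          (lintegral_const_mul' (u n) _ (hu n)).symm
        rw [tsum_congr h1]
        exact (lintegral_tsum fun n =>
          (aemeasurable_const.mul (Hker_aemeasurable L T Vhat α hcont ht n))).symm

lemma Snorm_nonneg (α : ℝ → (Fin 3 → ℤ) → ℂ) (t : ℝ) : 0 ≤ Snorm α t :=
  tsum_nonneg fun n => norm_nonneg _

lemma wt_nonneg (L : ℝ) (n : Fin 3 → ℤ) : 0 ≤ 4 * Real.pi ^ 2 * znormSq n / L ^ 2 := by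
  have := znormSq_nonneg n
  positivity

lemma Tnorm_nonneg (L : ℝ) (α : ℝ → (Fin 3 → ℤ) → ℂ) (t : ℝ) :
    0 ≤ Tnorm L α t :=
  tsum_nonneg fun n => mul_nonneg (wt_nonneg L n) (norm_nonneg _)

lemma tsumA_eq (α : ℝ → (Fin 3 → ℤ) → ℂ) (t : ℝ)
    (h : Summable fun n => ‖α t n‖) :
    ∑' n, (‖α t n‖₊ : ℝ≥0∞) = ENNReal.ofReal (Snorm α t) := by
  rw [Snorm, ENNReal.ofReal_tsum_of_nonneg (fun n => norm_nonneg _) h]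
  exact tsum_congr fun n => by
    exact (ofReal_norm _).symm

lemma tsumW_eq (L : ℝ) (hL : 0 < L) (α : ℝ → (Fin 3 → ℤ) → ℂ) (t : ℝ)
    (h : Summable fun n => (4 * Real.pi ^ 2 * znormSq n / L ^ 2) * ‖α t n‖) :
    ∑' n, ENNReal.ofReal (4 * Real.pi ^ 2 * znormSq n / L ^ 2) * (‖α t n‖₊ : ℝ≥0∞)
      = ENNReal.ofReal (Tnorm L α t) := by
  rw [Tnorm, ENNReal.ofReal_tsum_of_nonneg
    (fun n => mul_nonneg (wt_nonneg L n) (norm_nonneg _)) h]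
  exact tsum_congr fun n => by
    rw [ENNReal.ofReal_mul (wt_nonneg L n)]
    exact congrArg (ENNReal.ofReal (4 * Real.pi ^ 2 * znormSq n / L ^ 2) * ·) (ofReal_norm _).symm

lemma hBk (L b : ℝ) (Vhat : (Fin 3 → ℝ) → ℝ)
    (hb : IsLUB (Set.range fun k : Fin 3 → ℤ => |Vk L Vhat k|) b) :
    ∀ k, (‖Vk L Vhat k‖₊ : ℝ≥0∞) ≤ ENNReal.ofReal b := fun k => by
  show ‖Vk L Vhat k‖ₑ ≤ _
  rw [← ofReal_norm, Real.norm_eq_abs]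
  exact ENNReal.ofReal_le_ofReal (hb.1 ⟨k, rfl⟩)

lemma propS (L T b : ℝ) (hL : 0 < L) (Vhat : (Fin 3 → ℝ) → ℝ)
    (α : ℝ → (Fin 3 → ℤ) → ℂ) (hT : 0 < T)
    (hb : IsLUB (Set.range fun k : Fin 3 → ℤ => |Vk L Vhat k|) b) (hbpos : 0 < b)
    (hduh : DuhamelSol L T Vhat α)
    (hcont : ∀ n : Fin 3 → ℤ, ContinuousOn (fun t => α t n) (Set.Icc 0 T))
    (hSsum : ∀ t ∈ Set.Icc (0 : ℝ) T, Summable fun n => ‖α t n‖)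
    (hScont : ContinuousOn (Snorm α) (Set.Icc 0 T)) :
    ∀ t ∈ Set.Icc (0:ℝ) T,
      Snorm α t ≤ Snorm α 0 + ∫ s in (0:ℝ)..t, b * Snorm α s ^ 3 := by
  intro t ht
  have h0T : (0:ℝ) ∈ Set.Icc (0:ℝ) T := ⟨le_refl 0, le_of_lt hT⟩
  have hIccsub : Set.Icc (0:ℝ) t ⊆ Set.Icc 0 T := Set.Icc_subset_Icc le_rfl ht.2
  have hIocsub : Set.Ioc (0:ℝ) t ⊆ Set.Icc 0 T :=
    fun s hs => ⟨le_of_lt hs.1, hs.2.trans ht.2⟩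
  have main := duhamel_wsum_le L T hL Vhat α hduh hcont (fun _ => 1)
    (fun _ => ENNReal.one_ne_top) ht
  simp only [one_mul] at main
  -- bound the lintegral
  have hle : (∫⁻ s in Set.Ioc (0:ℝ) t, ∑' n, Hker L Vhat (α s) n)
      ≤ ∫⁻ s in Set.Ioc (0:ℝ) t, ENNReal.ofReal (b * Snorm α s ^ 3) := by
    refine setLIntegral_mono' measurableSet_Ioc fun s hs => ?_
    have hsT : s ∈ Set.Icc (0:ℝ) T := hIocsub hs
    calc ∑' n, Hker L Vhat (α s) n
        ≤ ENNReal.ofReal b * (∑' n, (‖α s n‖₊ : ℝ≥0∞)) ^ 3 :=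
          tsum_Hker_le L Vhat (α s) _ (hBk L b Vhat hb)
      _ = ENNReal.ofReal (b * Snorm α s ^ 3) := by
          rw [tsumA_eq α s (hSsum s hsT), ← ENNReal.ofReal_pow (Snorm_nonneg α s),
            ← ENNReal.ofReal_mul (le_of_lt hbpos)]
  -- integrability of the bound
  have hgcont : ContinuousOn (fun s => b * Snorm α s ^ 3) (Set.Icc 0 t) :=
    (continuousOn_const.mul ((hScont.mono hIccsub).pow 3))
  have hgint : IntegrableOn (fun s => b * Snorm α s ^ 3) (Set.Ioc 0 t) :=
    (hgcont.integrableOn_Icc).mono_set Set.Ioc_subset_Icc_self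
  have hgnn : 0 ≤ᵐ[volume.restrict (Set.Ioc (0:ℝ) t)] fun s => b * Snorm α s ^ 3 :=
    Filter.Eventually.of_forall fun s => by
      simpa using mul_nonneg (le_of_lt hbpos) (pow_nonneg (Snorm_nonneg α s) 3)
  have hconv : (∫⁻ s in Set.Ioc (0:ℝ) t, ENNReal.ofReal (b * Snorm α s ^ 3))
      = ENNReal.ofReal (∫ s in Set.Ioc (0:ℝ) t, b * Snorm α s ^ 3) :=
    (ofReal_integral_eq_lintegral_ofReal hgint hgnn).symm
  have hintnn : 0 ≤ ∫ s in Set.Ioc (0:ℝ) t, b * Snorm α s ^ 3 :=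
    setIntegral_nonneg measurableSet_Ioc fun s _ =>
      mul_nonneg (le_of_lt hbpos) (pow_nonneg (Snorm_nonneg α s) 3)
  have total : ENNReal.ofReal (Snorm α t)
      ≤ ENNReal.ofReal (Snorm α 0 + ∫ s in Set.Ioc (0:ℝ) t, b * Snorm α s ^ 3) := by
    rw [ENNReal.ofReal_add (Snorm_nonneg α 0) hintnn]
    calc ENNReal.ofReal (Snorm α t) = ∑' n, (‖α t n‖₊ : ℝ≥0∞) :=
          (tsumA_eq α t (hSsum t ht)).symm
      _ ≤ ∑' n, (‖α 0 n‖₊ : ℝ≥0∞) + ∫⁻ s in Set.Ioc (0:ℝ) t, ∑' n, Hker L Vhat (α s) n :=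
          main
      _ ≤ ENNReal.ofReal (Snorm α 0)
            + ENNReal.ofReal (∫ s in Set.Ioc (0:ℝ) t, b * Snorm α s ^ 3) := by
          rw [tsumA_eq α 0 (hSsum 0 h0T)]
          exact add_le_add le_rfl (hle.trans_eq hconv)
  have := (ENNReal.ofReal_le_ofReal_iff (by linarith [Snorm_nonneg α 0])).1 total
  rwa [intervalIntegral.integral_of_le ht.1]


lemma propT (L T C δ₂ b : ℝ) (hL : 0 < L) (hT : 0 < T) (hC : 0 < C) (hδ : 0 < δ₂)
    (Vhat : (Fin 3 → ℝ) → ℝ)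
    (hdecay : ∀ p, |Vhat p| ≤ C * (1 + rnorm p) ^ (-(3 + δ₂)))
    (hb : IsLUB (Set.range fun k : Fin 3 → ℤ => |Vk L Vhat k|) b) (hbpos : 0 < b)
    (α : ℝ → (Fin 3 → ℤ) → ℂ)
    (hduh : DuhamelSol L T Vhat α)
    (hcont : ∀ n : Fin 3 → ℤ, ContinuousOn (fun t => α t n) (Set.Icc 0 T))
    (hSsum : ∀ t ∈ Set.Icc (0 : ℝ) T, Summable fun n => ‖α t n‖)
    (hTsum : ∀ t ∈ Set.Icc (0 : ℝ) T,
      Summable fun n => (4 * Real.pi ^ 2 * znormSq n / L ^ 2) * ‖α t n‖)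
    (hScont : ContinuousOn (Snorm α) (Set.Icc 0 T))
    (hTcont : ContinuousOn (Tnorm L α) (Set.Icc 0 T)) :
    ∀ t ∈ Set.Icc (0:ℝ) T,
      Tnorm L α t ≤ Tnorm L α 0 + ∫ s in (0:ℝ)..t,
        (2 * b * Snorm α s ^ 2 * Tnorm L α s + 8 * C / 27 * Snorm α s ^ 3) := by
  intro t ht
  set gT : ℝ → ℝ := fun s => 2 * b * Snorm α s ^ 2 * Tnorm L α s + 8 * C / 27 * Snorm α s ^ 3
    with hgT
  have h0T : (0:ℝ) ∈ Set.Icc (0:ℝ) T := ⟨le_refl 0, le_of_lt hT⟩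
  have hIccsub : Set.Icc (0:ℝ) t ⊆ Set.Icc 0 T := Set.Icc_subset_Icc le_rfl ht.2
  have hIocsub : Set.Ioc (0:ℝ) t ⊆ Set.Icc 0 T :=
    fun s hs => ⟨le_of_lt hs.1, hs.2.trans ht.2⟩
  set u : (Fin 3 → ℤ) → ℝ≥0∞ := fun n => ENNReal.ofReal (4 * Real.pi ^ 2 * znormSq n / L ^ 2)
    with hu
  have hufin : ∀ n, u n ≠ ∞ := fun n => ENNReal.ofReal_ne_top
  have main := duhamel_wsum_le L T hL Vhat α hduh hcont u hufin ht
  have hsplit : ∀ n k : Fin 3 → ℤ, u n ≤ 2 * u (n - k) + 2 * u k := by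
    intro n k
    calc u n ≤ ENNReal.ofReal (2 * (4 * Real.pi ^ 2 * znormSq (n - k) / L ^ 2)
          + 2 * (4 * Real.pi ^ 2 * znormSq k / L ^ 2)) :=
        ENNReal.ofReal_le_ofReal (wt_split L hL n k)
      _ = 2 * u (n - k) + 2 * u k := by
        rw [ENNReal.ofReal_add (by linarith [wt_nonneg L (n - k)]) (by linarith [wt_nonneg L k]),
          ENNReal.ofReal_mul (by norm_num : (0:ℝ) ≤ 2),
          ENNReal.ofReal_mul (by norm_num : (0:ℝ) ≤ 2), ENNReal.ofReal_ofNat]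
  have hCq : ∀ k, u k * (‖Vk L Vhat k‖₊ : ℝ≥0∞) ≤ ENNReal.ofReal (4 * C / 27) := by
    intro k
    rw [hu]
    change _ * ‖Vk L Vhat k‖ₑ ≤ _
    rw [← ofReal_norm, Real.norm_eq_abs,
      ← ENNReal.ofReal_mul (wt_nonneg L k)]
    exact ENNReal.ofReal_le_ofReal (decay_bound L C δ₂ hL hC hδ Vhat hdecay k)
  -- bound the lintegral
  have hle : (∫⁻ s in Set.Ioc (0:ℝ) t, ∑' n, u n * Hker L Vhat (α s) n)
      ≤ ∫⁻ s in Set.Ioc (0:ℝ) t, ENNReal.ofReal (gT s) := by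
    refine setLIntegral_mono' measurableSet_Ioc fun s hs => ?_
    have hsT : s ∈ Set.Icc (0:ℝ) T := hIocsub hs
    have hconv2 : 2 * ENNReal.ofReal b * ENNReal.ofReal (Tnorm L α s)
          * ENNReal.ofReal (Snorm α s) ^ 2
        + 2 * ENNReal.ofReal (4 * C / 27) * ENNReal.ofReal (Snorm α s) ^ 3
        = ENNReal.ofReal (gT s) := by
      rw [hgT]
      rw [ENNReal.ofReal_add
        (mul_nonneg (mul_nonneg (by linarith : (0:ℝ) ≤ 2 * b)
          (pow_nonneg (Snorm_nonneg α s) 2)) (Tnorm_nonneg L α s))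
        (mul_nonneg (by linarith : (0:ℝ) ≤ 8 * C / 27) (pow_nonneg (Snorm_nonneg α s) 3))]
      congr 1
      · rw [show (2:ℝ≥0∞) = ENNReal.ofReal 2 by simp,
          ← ENNReal.ofReal_pow (Snorm_nonneg α s),
          ← ENNReal.ofReal_mul (by norm_num : (0:ℝ) ≤ 2),
          ← ENNReal.ofReal_mul (by linarith : (0:ℝ) ≤ 2 * b),
          ← ENNReal.ofReal_mul (mul_nonneg (by linarith : (0:ℝ) ≤ 2 * b)
            (Tnorm_nonneg L α s))]
        congr 1
        ring
      · rw [show (2:ℝ≥0∞) = ENNReal.ofReal 2 by simp,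
          ← ENNReal.ofReal_pow (Snorm_nonneg α s),
          ← ENNReal.ofReal_mul (by norm_num : (0:ℝ) ≤ 2),
          ← ENNReal.ofReal_mul (by linarith : (0:ℝ) ≤ 2 * (4 * C / 27))]
        congr 1
        ring
    calc ∑' n, u n * Hker L Vhat (α s) n
        ≤ 2 * ENNReal.ofReal b * (∑' n, u n * (‖α s n‖₊ : ℝ≥0∞))
            * (∑' n, (‖α s n‖₊ : ℝ≥0∞)) ^ 2
          + 2 * ENNReal.ofReal (4 * C / 27) * (∑' n, (‖α s n‖₊ : ℝ≥0∞)) ^ 3 :=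
          tsum_w_Hker_le L Vhat (α s) u _ _ (hBk L b Vhat hb) hCq hsplit
      _ = ENNReal.ofReal (gT s) := by
          rw [tsumA_eq α s (hSsum s hsT), tsumW_eq L hL α s (hTsum s hsT)]
          exact hconv2
  -- integrability of the bound
  have hgcont : ContinuousOn gT (Set.Icc 0 t) := by
    rw [hgT]
    exact ((continuousOn_const.mul ((hScont.mono hIccsub).pow 2)).mul
      (hTcont.mono hIccsub)).add (continuousOn_const.mul ((hScont.mono hIccsub).pow 3))
  have hgTnn : ∀ s, 0 ≤ gT s := fun s => by
    rw [hgT]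
    have h1 := Snorm_nonneg α s
    have h2 := Tnorm_nonneg L α s
    have hb' := le_of_lt hbpos
    have hC' := le_of_lt hC
    positivity
  have hgint : IntegrableOn gT (Set.Ioc 0 t) :=
    (hgcont.integrableOn_Icc).mono_set Set.Ioc_subset_Icc_self
  have hgnn : 0 ≤ᵐ[volume.restrict (Set.Ioc (0:ℝ) t)] gT :=
    Filter.Eventually.of_forall fun s => by simpa using hgTnn s
  have hconv : (∫⁻ s in Set.Ioc (0:ℝ) t, ENNReal.ofReal (gT s))
      = ENNReal.ofReal (∫ s in Set.Ioc (0:ℝ) t, gT s) :=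
    (ofReal_integral_eq_lintegral_ofReal hgint hgnn).symm
  have hintnn : 0 ≤ ∫ s in Set.Ioc (0:ℝ) t, gT s :=
    setIntegral_nonneg measurableSet_Ioc fun s _ => hgTnn s
  have total : ENNReal.ofReal (Tnorm L α t)
      ≤ ENNReal.ofReal (Tnorm L α 0 + ∫ s in Set.Ioc (0:ℝ) t, gT s) := by
    rw [ENNReal.ofReal_add (Tnorm_nonneg L α 0) hintnn]
    calc ENNReal.ofReal (Tnorm L α t) = ∑' n, u n * (‖α t n‖₊ : ℝ≥0∞) :=
          (tsumW_eq L hL α t (hTsum t ht)).symm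
      _ ≤ ∑' n, u n * (‖α 0 n‖₊ : ℝ≥0∞)
            + ∫⁻ s in Set.Ioc (0:ℝ) t, ∑' n, u n * Hker L Vhat (α s) n := main
      _ ≤ ENNReal.ofReal (Tnorm L α 0)
            + ENNReal.ofReal (∫ s in Set.Ioc (0:ℝ) t, gT s) := by
          rw [tsumW_eq L hL α 0 (hTsum 0 h0T)]
          exact add_le_add le_rfl (hle.trans_eq hconv)
  have hfin := (ENNReal.ofReal_le_ofReal_iff (by linarith [Tnorm_nonneg L α 0])).1 total
  rwa [intervalIntegral.integral_of_le ht.1]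

lemma ode_part (T C b S0 : ℝ) (hT : 0 < T) (hC : 0 < C) (hbpos : 0 < b) (hS0 : 0 < S0)
    (S Tn : ℝ → ℝ)
    (hScont : ContinuousOn S (Set.Icc 0 T)) (hTcont : ContinuousOn Tn (Set.Icc 0 T))
    (hSnn : ∀ s, 0 ≤ S s) (hTnn : ∀ s, 0 ≤ Tn s)
    (hSineq : ∀ t ∈ Set.Icc (0:ℝ) T, S t ≤ S0 + ∫ s in (0:ℝ)..t, b * S s ^ 3)
    (hTineq : ∀ t ∈ Set.Icc (0:ℝ) T, Tn t ≤ Tn 0 + ∫ s in (0:ℝ)..t,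
        (2 * b * S s ^ 2 * Tn s + 8 * C / 27 * S s ^ 3)) :
    ∀ t ∈ Set.Icc (0:ℝ) T, 2 * S0 ^ 2 * b * t < 1 →
      Tn t ≤ Tn 0 / (1 - 2 * S0 ^ 2 * b * t)
        + (8 * C / (27 * b)) * S0 * ((1 - 2 * S0 ^ 2 * b * t) ^ (-(3:ℝ)/2)
            - (1 - 2 * S0 ^ 2 * b * t)⁻¹) := by
  intro t0 ht0 hx
  have hIccsub : Set.Icc (0:ℝ) t0 ⊆ Set.Icc 0 T := Set.Icc_subset_Icc le_rfl ht0.2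
  have hIoosub : Set.Ioo (0:ℝ) t0 ⊆ Set.Ioo 0 T := fun s hs => ⟨hs.1, lt_of_lt_of_le hs.2 ht0.2⟩
  have hIooIcc : Set.Ioo (0:ℝ) T ⊆ Set.Icc 0 T := Set.Ioo_subset_Icc_self
  -- the y function
  set y : ℝ → ℝ := fun r => 1 - 2 * S0 ^ 2 * b * r with hy
  have hypos : ∀ r ∈ Set.Icc (0:ℝ) t0, 0 < y r := by
    intro r hr
    have : 2 * S0 ^ 2 * b * r ≤ 2 * S0 ^ 2 * b * t0 :=
      mul_le_mul_of_nonneg_left hr.2 (by positivity)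
    simp only [hy]; linarith
  have hyle1 : ∀ r ∈ Set.Icc (0:ℝ) t0, y r ≤ 1 := by
    intro r hr
    have : 0 ≤ 2 * S0 ^ 2 * b * r := by have := hr.1; positivity
    simp only [hy]; linarith
  have hycont : Continuous y := by fun_prop
  have hyder : ∀ r : ℝ, HasDerivAt y (-(2 * S0 ^ 2 * b)) r := by
    intro r
    have h1 : HasDerivAt (fun r : ℝ => 2 * S0 ^ 2 * b * r) (2 * S0 ^ 2 * b) r := by
      simpa using (hasDerivAt_id r).const_mul (2 * S0 ^ 2 * b)
    simpa using h1.const_sub 1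
  -- the function F
  set F : ℝ → ℝ := fun r => S0 + ∫ s in (0:ℝ)..r, b * S s ^ 3 with hF
  have hfS : ContinuousOn (fun s => b * S s ^ 3) (Set.Icc 0 T) :=
    continuousOn_const.mul (hScont.pow 3)
  have hintS : ∀ r ∈ Set.Icc (0:ℝ) t0, IntervalIntegrable (fun s => b * S s ^ 3) volume 0 r := by
    intro r hr
    have : ContinuousOn (fun s => b * S s ^ 3) (Set.uIcc 0 r) := by
      refine hfS.mono ?_
      rw [Set.uIcc_of_le hr.1]
      exact (Set.Icc_subset_Icc le_rfl hr.2).trans hIccsub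
    exact this.intervalIntegrable
  have hFcont : ContinuousOn F (Set.Icc 0 t0) := by
    have h_int : IntegrableOn (fun s => b * S s ^ 3) (Set.uIcc 0 t0) := by
      rw [Set.uIcc_of_le ht0.1]
      exact (hfS.mono hIccsub).integrableOn_Icc
    have := intervalIntegral.continuousOn_primitive_interval h_int
    rw [Set.uIcc_of_le ht0.1] at this
    exact continuousOn_const.add this
  have hFder : ∀ r ∈ Set.Ioo (0:ℝ) t0, HasDerivAt F (b * S r ^ 3) r := by
    intro r hr
    have hrT : r ∈ Set.Ioo (0:ℝ) T := hIoosub hr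
    have hconO : ContinuousOn (fun s => b * S s ^ 3) (Set.Ioo 0 T) := hfS.mono hIooIcc
    have h := intervalIntegral.integral_hasDerivAt_right
      (hintS r ⟨le_of_lt hr.1, le_of_lt hr.2⟩)
      (hconO.stronglyMeasurableAtFilter isOpen_Ioo r hrT)
      (hconO.continuousAt (isOpen_Ioo.mem_nhds hrT))
    exact h.const_add S0
  have hFpos : ∀ r ∈ Set.Icc (0:ℝ) t0, 0 < F r := by
    intro r hr
    have : 0 ≤ ∫ s in (0:ℝ)..r, b * S s ^ 3 :=
      intervalIntegral.integral_nonneg hr.1 fun s _ => mul_nonneg hbpos.le (pow_nonneg (hSnn s) 3)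
    simp only [hF]; linarith
  have hSF : ∀ r ∈ Set.Icc (0:ℝ) t0, S r ≤ F r := fun r hr => hSineq r (hIccsub hr)
  -- monotone h
  set h : ℝ → ℝ := fun r => (F r * F r)⁻¹ + 2 * b * r with hh
  have hmono : MonotoneOn h (Set.Icc 0 t0) := by
    refine monotoneOn_of_deriv_nonneg (convex_Icc 0 t0) ?_ ?_ ?_
    · refine ContinuousOn.add ?_ (by fun_prop)
      exact (hFcont.mul hFcont).inv₀ fun r hr => by
        have := hFpos r hr; exact (mul_pos this this).ne'
    · intro r hr
      rw [interior_Icc] at hr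
      have hne0 : F r * F r ≠ 0 := by
        have := hFpos r (Set.Ioo_subset_Icc_self hr); nlinarith
      have hd : HasDerivAt h
          (-(b * S r ^ 3 * F r + F r * (b * S r ^ 3)) / (F r * F r) ^ 2 + 2 * b) r := by
        refine HasDerivAt.add ?_ ?_
        · exact (((hFder r hr).mul (hFder r hr)).inv hne0)
        · simpa using (hasDerivAt_id r).const_mul (2 * b)
      exact hd.differentiableAt.differentiableWithinAt
    · intro r hr
      rw [interior_Icc] at hr
      have hrIcc := Set.Ioo_subset_Icc_self hr
      have hne0 : F r * F r ≠ 0 := by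
        have := hFpos r hrIcc; nlinarith
      have hd : HasDerivAt h
          (-(b * S r ^ 3 * F r + F r * (b * S r ^ 3)) / (F r * F r) ^ 2 + 2 * b) r := by
        refine HasDerivAt.add ?_ ?_
        · exact (((hFder r hr).mul (hFder r hr)).inv hne0)
        · simpa using (hasDerivAt_id r).const_mul (2 * b)
      rw [hd.deriv]
      have hFp := hFpos r hrIcc
      have hS3 : S r ^ 3 ≤ F r ^ 3 := pow_le_pow_left₀ (hSnn r) (hSF r hrIcc) 3
      have key : -(b * S r ^ 3 * F r + F r * (b * S r ^ 3)) / (F r * F r) ^ 2 + 2 * b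
          = (2 * b * F r ^ 4 - 2 * b * S r ^ 3 * F r) / (F r * F r) ^ 2 := by
        field_simp
        ring
      rw [key]
      apply div_nonneg _ (by positivity)
      nlinarith [mul_nonneg (mul_nonneg (le_of_lt hbpos) hFp.le) (sub_nonneg.2 hS3)]
  -- consequence of monotonicity: bound on F
  have hb2 : ∀ r ∈ Set.Icc (0:ℝ) t0, F r ^ 2 ≤ S0 ^ 2 / y r := by
    intro r hr
    have h0m : h 0 ≤ h r := hmono (Set.left_mem_Icc.2 ht0.1) hr hr.1
    have hF0 : F 0 = S0 := by simp [hF]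
    have hFp := hFpos r hr
    have hyp := hypos r hr
    have h0eq : h 0 = (S0 * S0)⁻¹ := by simp [hh, hF0]
    have h1 : (S0 * S0)⁻¹ ≤ (F r * F r)⁻¹ + 2 * b * r := by
      rw [h0eq] at h0m; simpa [hh] using h0m
    have h2 : y r / S0 ^ 2 ≤ (F r * F r)⁻¹ := by
      have he : y r / S0 ^ 2 = (S0 * S0)⁻¹ - 2 * b * r := by
        field_simp [hy]
        ring
      linarith
    have h3 : 0 < y r / S0 ^ 2 := by positivity
    calc F r ^ 2 = ((F r * F r)⁻¹)⁻¹ := by rw [inv_inv, sq]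
      _ ≤ (y r / S0 ^ 2)⁻¹ := inv_anti₀ h3 h2
      _ = S0 ^ 2 / y r := by rw [inv_div]
  have hb1 : ∀ r ∈ Set.Icc (0:ℝ) t0, F r ≤ S0 / Real.sqrt (y r) := by
    intro r hr
    have hFp := (hFpos r hr).le
    have h1 := Real.sqrt_le_sqrt (hb2 r hr)
    rwa [Real.sqrt_sq hFp, Real.sqrt_div (sq_nonneg S0) (y r), Real.sqrt_sq hS0.le] at h1
  have hSb2 : ∀ r ∈ Set.Icc (0:ℝ) t0, S r ^ 2 ≤ S0 ^ 2 / y r := fun r hr =>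
    le_trans (pow_le_pow_left₀ (hSnn r) (hSF r hr) 2) (hb2 r hr)
  have hsq : ∀ r ∈ Set.Icc (0:ℝ) t0, 0 < Real.sqrt (y r) := fun r hr =>
    Real.sqrt_pos.2 (hypos r hr)
  have hSb3 : ∀ r ∈ Set.Icc (0:ℝ) t0,
      S r ^ 3 ≤ S0 ^ 3 * ((y r)⁻¹ * (Real.sqrt (y r))⁻¹) := by
    intro r hr
    have h1 : S r ^ 3 ≤ F r ^ 3 := pow_le_pow_left₀ (hSnn r) (hSF r hr) 3
    have hyp := hypos r hr
    have h2 : F r ^ 2 * F r ≤ (S0 ^ 2 / y r) * (S0 / Real.sqrt (y r)) :=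
      mul_le_mul (hb2 r hr) (hb1 r hr) (hFpos r hr).le (by positivity)
    calc S r ^ 3 ≤ F r ^ 3 := h1
      _ = F r ^ 2 * F r := by ring
      _ ≤ (S0 ^ 2 / y r) * (S0 / Real.sqrt (y r)) := h2
      _ = S0 ^ 3 * ((y r)⁻¹ * (Real.sqrt (y r))⁻¹) := by
          rw [div_eq_mul_inv, div_eq_mul_inv]; ring
  -- the comparison function G
  set c : ℝ := 8 * C / 27 * S0 ^ 3 with hc
  set g : ℝ → ℝ := fun s => 2 * b * S0 ^ 2 * (y s)⁻¹ * Tn s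
      + c * ((y s)⁻¹ * (Real.sqrt (y s))⁻¹) with hg
  have hgcont : ContinuousOn g (Set.Icc 0 t0) := by
    have hyc : ContinuousOn y (Set.Icc 0 t0) := hycont.continuousOn
    have hyinv : ContinuousOn (fun s => (y s)⁻¹) (Set.Icc 0 t0) :=
      hyc.inv₀ fun r hr => (hypos r hr).ne'
    have hsqc : ContinuousOn (fun s => (Real.sqrt (y s))⁻¹) (Set.Icc 0 t0) :=
      (Real.continuous_sqrt.comp_continuousOn hyc).inv₀ fun r hr => (hsq r hr).ne'
    exact ((continuousOn_const.mul hyinv).mul (hTcont.mono hIccsub)).add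
      (continuousOn_const.mul (hyinv.mul hsqc))
  have hintg : ∀ r ∈ Set.Icc (0:ℝ) t0, IntervalIntegrable g volume 0 r := by
    intro r hr
    have : ContinuousOn g (Set.uIcc 0 r) := hgcont.mono (by
      rw [Set.uIcc_of_le hr.1]; exact Set.Icc_subset_Icc le_rfl hr.2)
    exact this.intervalIntegrable
  set G : ℝ → ℝ := fun r => Tn 0 + ∫ s in (0:ℝ)..r, g s with hG
  have hGcont : ContinuousOn G (Set.Icc 0 t0) := by
    have h_int : IntegrableOn g (Set.uIcc 0 t0) := by
      rw [Set.uIcc_of_le ht0.1]; exact hgcont.integrableOn_Icc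
    have := intervalIntegral.continuousOn_primitive_interval h_int
    rw [Set.uIcc_of_le ht0.1] at this
    exact continuousOn_const.add this
  have hGder : ∀ r ∈ Set.Ioo (0:ℝ) t0, HasDerivAt G (g r) r := by
    intro r hr
    have hcon : ContinuousOn g (Set.Ioo 0 t0) := hgcont.mono Set.Ioo_subset_Icc_self
    have := intervalIntegral.integral_hasDerivAt_right
      (hintg r ⟨hr.1.le, hr.2.le⟩)
      (hcon.stronglyMeasurableAtFilter isOpen_Ioo r hr)
      (hcon.continuousAt (isOpen_Ioo.mem_nhds hr))
    exact this.const_add (Tn 0)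
  have hTG : ∀ r ∈ Set.Icc (0:ℝ) t0, Tn r ≤ G r := by
    intro r hr
    refine (hTineq r (hIccsub hr)).trans (add_le_add le_rfl ?_)
    have hint1 : IntervalIntegrable
        (fun s => 2 * b * S s ^ 2 * Tn s + 8 * C / 27 * S s ^ 3) volume 0 r := by
      have : ContinuousOn (fun s => 2 * b * S s ^ 2 * Tn s + 8 * C / 27 * S s ^ 3)
          (Set.uIcc 0 r) := by
        rw [Set.uIcc_of_le hr.1]
        have hsub := (Set.Icc_subset_Icc le_rfl hr.2).trans hIccsub
        exact ((continuousOn_const.mul ((hScont.mono hsub).pow 2)).mul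
          (hTcont.mono hsub)).add (continuousOn_const.mul ((hScont.mono hsub).pow 3))
      exact this.intervalIntegrable
    refine intervalIntegral.integral_mono_on hr.1 hint1 (hintg r hr) ?_
    intro σ hσ
    have hσ0 : σ ∈ Set.Icc (0:ℝ) t0 := ⟨hσ.1, hσ.2.trans hr.2⟩
    have e1 : 2 * b * S σ ^ 2 * Tn σ ≤ 2 * b * S0 ^ 2 * (y σ)⁻¹ * Tn σ := by
      have h2 : S σ ^ 2 ≤ S0 ^ 2 / y σ := hSb2 σ hσ0
      have h3 := mul_le_mul_of_nonneg_right
        (mul_le_mul_of_nonneg_left h2 (by positivity : (0:ℝ) ≤ 2 * b)) (hTnn σ)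
      calc 2 * b * S σ ^ 2 * Tn σ = 2 * b * (S σ ^ 2) * Tn σ := by ring
        _ ≤ 2 * b * (S0 ^ 2 / y σ) * Tn σ := h3
        _ = 2 * b * S0 ^ 2 * (y σ)⁻¹ * Tn σ := by rw [div_eq_mul_inv]; ring
    have e2 : 8 * C / 27 * S σ ^ 3 ≤ c * ((y σ)⁻¹ * (Real.sqrt (y σ))⁻¹) := by
      have h3 := hSb3 σ hσ0
      calc 8 * C / 27 * S σ ^ 3
          ≤ 8 * C / 27 * (S0 ^ 3 * ((y σ)⁻¹ * (Real.sqrt (y σ))⁻¹)) :=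
            mul_le_mul_of_nonneg_left h3 (by positivity)
        _ = c * ((y σ)⁻¹ * (Real.sqrt (y σ))⁻¹) := by rw [hc]; ring
    simp only [hg]
    linarith
  -- the functions E and ψ
  set E : ℝ → ℝ := fun r => (1 - Real.sqrt (y r)) / (S0 ^ 2 * b) with hE
  have hEder : ∀ r ∈ Set.Ioo (0:ℝ) t0, HasDerivAt E ((Real.sqrt (y r))⁻¹) r := by
    intro r hr
    have hyp := hypos r (Set.Ioo_subset_Icc_self hr)
    have hsqr := hsq r (Set.Ioo_subset_Icc_self hr)
    have h1 : HasDerivAt (fun s => Real.sqrt (y s))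
        (1 / (2 * Real.sqrt (y r)) * (-(2 * S0 ^ 2 * b))) r :=
      (Real.hasDerivAt_sqrt hyp.ne').comp r (hyder r)
    have h2 := (h1.const_sub 1).div_const (S0 ^ 2 * b)
    refine h2.congr_deriv ?_
    field_simp
  set ψ : ℝ → ℝ := fun r => y r * G r - c * E r with hψ
  have hψanti : AntitoneOn ψ (Set.Icc 0 t0) := by
    refine antitoneOn_of_deriv_nonpos (convex_Icc 0 t0) ?_ ?_ ?_
    · refine ((hycont.continuousOn.mul hGcont)).sub (continuousOn_const.mul ?_)
      exact ((continuousOn_const.sub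
        (Real.continuous_sqrt.comp_continuousOn hycont.continuousOn)).div_const _)
    · intro r hr
      rw [interior_Icc] at hr
      exact (((hyder r).mul (hGder r hr)).sub
        ((hEder r hr).const_mul c)).differentiableAt.differentiableWithinAt
    · intro r hr
      rw [interior_Icc] at hr
      have hrIcc := Set.Ioo_subset_Icc_self hr
      have hd : HasDerivAt ψ
          (-(2 * S0 ^ 2 * b) * G r + y r * g r - c * (Real.sqrt (y r))⁻¹) r :=
        ((hyder r).mul (hGder r hr)).sub ((hEder r hr).const_mul c)
      rw [hd.deriv]
      have hyp := hypos r hrIcc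
      have hsqr := hsq r hrIcc
      have hygr : y r * g r = 2 * b * S0 ^ 2 * Tn r + c * (Real.sqrt (y r))⁻¹ := by
        simp only [hg]
        field_simp
      rw [hygr]
      have hTGr := hTG r hrIcc
      have h6 : (2 * S0 ^ 2 * b) * Tn r ≤ (2 * S0 ^ 2 * b) * G r :=
        mul_le_mul_of_nonneg_left hTGr (by positivity)
      calc -(2 * S0 ^ 2 * b) * G r + (2 * b * S0 ^ 2 * Tn r + c * (Real.sqrt (y r))⁻¹)
            - c * (Real.sqrt (y r))⁻¹
          = (2 * S0 ^ 2 * b) * Tn r - (2 * S0 ^ 2 * b) * G r := by ring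
        _ ≤ 0 := by linarith
  have hψ0 : ψ 0 = Tn 0 := by
    simp [hψ, hy, hG, hE, intervalIntegral.integral_same, Real.sqrt_one]
  have hψt0 := hψanti (Set.left_mem_Icc.2 ht0.1) (Set.right_mem_Icc.2 ht0.1) ht0.1
  rw [hψ0] at hψt0
  -- final algebra
  have hyt0 : 0 < y t0 := hypos t0 (Set.right_mem_Icc.2 ht0.1)
  have hGle : G t0 ≤ (Tn 0 + c * E t0) / y t0 := by
    rw [le_div_iff₀ hyt0]
    simp only [hψ] at hψt0
    linarith
  set u : ℝ := Real.sqrt (y t0) with huu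
  have hu : 0 < u := hsq t0 (Set.right_mem_Icc.2 ht0.1)
  have hu1 : u ≤ 1 := Real.sqrt_le_one.mpr (hyle1 t0 (Set.right_mem_Icc.2 ht0.1))
  have huy : u ^ 2 = y t0 := Real.sq_sqrt hyt0.le
  have hrpow : y t0 ^ (-(3:ℝ)/2) = (u ^ 3)⁻¹ := by
    have h32 : y t0 ^ ((3:ℝ)/2) = u ^ 3 := by
      calc y t0 ^ ((3:ℝ)/2) = (y t0 ^ ((1:ℝ)/2)) ^ (3:ℝ) := by
            rw [← Real.rpow_mul hyt0.le]; norm_num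
        _ = u ^ (3:ℝ) := by rw [← Real.sqrt_eq_rpow]
        _ = u ^ (3:ℕ) := by
            rw [show ((3:ℝ)) = ((3:ℕ):ℝ) by norm_num, Real.rpow_natCast]
    rw [show (-(3:ℝ)/2) = -((3:ℝ)/2) by ring, Real.rpow_neg hyt0.le, h32]
  have hKeq : c / (S0 ^ 2 * b) = 8 * C / (27 * b) * S0 := by
    rw [hc]; field_simp
  have hmain : (1 - u) / y t0 ≤ y t0 ^ (-(3:ℝ)/2) - (y t0)⁻¹ := by
    rw [hrpow, ← huy]
    have key2 : (u ^ 3)⁻¹ - (u ^ 2)⁻¹ - (1 - u) / u ^ 2 = (1 - u) ^ 2 / u ^ 3 := by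
      field_simp
    have h5 : 0 ≤ (1 - u) ^ 2 / u ^ 3 := by positivity
    linarith
  have hKnn : (0:ℝ) ≤ 8 * C / (27 * b) * S0 := by positivity
  calc Tn t0 ≤ G t0 := hTG t0 (Set.right_mem_Icc.2 ht0.1)
    _ ≤ (Tn 0 + c * E t0) / y t0 := hGle
    _ = Tn 0 / y t0 + (c / (S0 ^ 2 * b)) * ((1 - u) / y t0) := by
        rw [hE]; field_simp; ring
    _ ≤ Tn 0 / y t0 + (8 * C / (27 * b) * S0) * (y t0 ^ (-(3:ℝ)/2) - (y t0)⁻¹) := by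
        rw [hKeq]
        exact add_le_add le_rfl (mul_le_mul_of_nonneg_left hmain hKnn)
    _ = Tn 0 / (1 - 2 * S0 ^ 2 * b * t0)
        + (8 * C / (27 * b)) * S0 * ((1 - 2 * S0 ^ 2 * b * t0) ^ (-(3:ℝ)/2)
            - (1 - 2 * S0 ^ 2 * b * t0)⁻¹) := by
        simp only [hy]

end auxiliaryLemmas

/-- control of the kinetic-weighted `ℓ¹`-norm of a Duhamel solution
of the momentum-space Hartree equation:
`T₊(t) ≤ T₊(0)/(1 − 2S(0)²𝔟t) + (8C/(27𝔟))·S(0)·((1 − 2S(0)²𝔟t)^{−3/2} − (1 − 2S(0)²𝔟t)⁻¹)`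
whenever `2S(0)²𝔟t < 1`, for a potential with `|V̂(p)| ≤ C(1+|p|)^{−(3+δ₂)}`. -/
theorem stmt12 (L T C δ₂ b : ℝ) (hL : 0 < L) (hT : 0 < T) (hC : 0 < C) (hδ : 0 < δ₂)
    (Vhat : (Fin 3 → ℝ) → ℝ)
    (hdecay : ∀ p, |Vhat p| ≤ C * (1 + rnorm p) ^ (-(3 + δ₂)))
    (hb : IsLUB (Set.range fun k : Fin 3 → ℤ => |Vk L Vhat k|) b) (hbpos : 0 < b)
    (α : ℝ → (Fin 3 → ℤ) → ℂ)
    (hduh : DuhamelSol L T Vhat α)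
    (hcont : ∀ n : Fin 3 → ℤ, ContinuousOn (fun t => α t n) (Set.Icc 0 T))
    (hSsum : ∀ t ∈ Set.Icc (0 : ℝ) T, Summable fun n => ‖α t n‖)
    (hTsum : ∀ t ∈ Set.Icc (0 : ℝ) T,
      Summable fun n => (4 * Real.pi ^ 2 * znormSq n / L ^ 2) * ‖α t n‖)
    (hScont : ContinuousOn (Snorm α) (Set.Icc 0 T))
    (hTcont : ContinuousOn (Tnorm L α) (Set.Icc 0 T))
    (hS0 : 0 < Snorm α 0) :
    ∀ t ∈ Set.Icc (0 : ℝ) T, 2 * Snorm α 0 ^ 2 * b * t < 1 →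
      Tnorm L α t
        ≤ Tnorm L α 0 / (1 - 2 * Snorm α 0 ^ 2 * b * t)
          + (8 * C / (27 * b)) * Snorm α 0 *
              ((1 - 2 * Snorm α 0 ^ 2 * b * t) ^ (-(3 : ℝ) / 2)
                - (1 - 2 * Snorm α 0 ^ 2 * b * t)⁻¹) := by
  intro t ht hx
  exact ode_part T C b (Snorm α 0) hT hC hbpos hS0 (Snorm α) (Tnorm L α) hScont hTcont
    (Snorm_nonneg α) (Tnorm_nonneg L α)
    (propS L T b hL Vhat α hT hb hbpos hduh hcont hSsum hScont)
    (propT L T C δ₂ b hL hT hC hδ Vhat hdecay hb hbpos α hduh hcont hSsum hTsum hScont hTcont)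
    t ht hx

end
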